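/- (Hájek–Rényi-type bound) Let Z_1,...,Z_n be independent mean-zero square-integrable random variables and c_1 ≤ c_2 ≤ ... ≤ c_n positive constants. Then for any α > 0, P(max_{1≤k≤n} |∑_{i=1}^k Z_i|/c_k > α) ≤ α^{-2} ∑_{k=1}^n E[Z_k²]/c_k². -/

import Mathlib

/-!
Put `S k = Z 1 + ⋯ + Z k` and `T = ∑_{j ≤ n} (c_j⁻² - c_{j+1}⁻²) S_j²` with the convention
`c_{n+1}⁻² = 0`. Since the increments of `S` are orthogonal, `E S_j² = ∑_{i ≤ j} E Z_i²`, and Abel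
summation turns this into `E T = ∑_k E Z_k² / c_k²`. Decompose the event according to the first
index `k` with `|S_k| > α c_k`. That piece `A_k` is determined by `Z 1, …, Z k`, hence independent
of `S_j - S_k` for `j ≥ k`, so `∫_{A_k} S_j² ≥ ∫_{A_k} S_k² ≥ α² c_k² P(A_k)`. The weights of
`T` with index `j ≥ k` add up to `c_k⁻²`, so `∫_{A_k} T ≥ α² P(A_k)`, and summing over `k`
gives `α² P(max_k |S_k| / c_k > α) ≤ E T`.
-/

open MeasureTheory ProbabilityTheory Finset

section Independent

variable {Ω : Type*} {mΩ : MeasurableSpace Ω} {μ : Measure Ω} {m₁ m₂ : MeasurableSpace Ω}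
  {X Y : Ω → ℝ}

lemma ProbabilityTheory.Indep.integral_mul_eq_zero (h : Indep m₁ m₂ μ) (hm₁ : m₁ ≤ mΩ)
    (hm₂ : m₂ ≤ mΩ) (hX : Measurable[m₁] X) (hY : Measurable[m₂] Y) (hY₀ : μ[Y] = 0) :
    ∫ ω, X ω * Y ω ∂μ = 0 := by
  have hXY : IndepFun X Y μ := (IndepFun_iff_Indep X Y μ).2 <|
    indep_of_indep_of_le_left (indep_of_indep_of_le_right h hY.comap_le) hX.comap_le
  rw [hXY.integral_fun_mul_eq_mul_integral (hX.mono hm₁ le_rfl).aestronglyMeasurable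
    (hY.mono hm₂ le_rfl).aestronglyMeasurable, hY₀, mul_zero]

lemma ProbabilityTheory.Indep.setIntegral_add_sq (h : Indep m₁ m₂ μ) (hm₁ : m₁ ≤ mΩ)
    (hm₂ : m₂ ≤ mΩ) {A : Set Ω} (hA : MeasurableSet[m₁] A) (hX : Measurable[m₁] X)
    (hY : Measurable[m₂] Y) (hX₂ : MemLp X 2 μ) (hY₂ : MemLp Y 2 μ) (hY₀ : μ[Y] = 0) :
    ∫ ω in A, (X ω + Y ω) ^ 2 ∂μ = ∫ ω in A, X ω ^ 2 ∂μ + ∫ ω in A, Y ω ^ 2 ∂μ := by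
  have hcross : ∫ ω in A, X ω * Y ω ∂μ = 0 := by
    rw [← integral_indicator (hm₁ _ hA)]
    simp_rw [Set.indicator_mul_left]
    exact h.integral_mul_eq_zero hm₁ hm₂ (hX.indicator hA) hY hY₀
  have hXY : IntegrableOn (fun ω => 2 * (X ω * Y ω)) A μ :=
    ((hX₂.integrable_mul hY₂).const_mul 2).integrableOn
  have hX2XY : IntegrableOn (fun ω => X ω ^ 2 + 2 * (X ω * Y ω)) A μ :=
    hX₂.integrable_sq.integrableOn.add hXY
  calc ∫ ω in A, (X ω + Y ω) ^ 2 ∂μ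
      = ∫ ω in A, (X ω ^ 2 + 2 * (X ω * Y ω) + Y ω ^ 2) ∂μ := by congr with ω; ring
    _ = ∫ ω in A, X ω ^ 2 ∂μ + 2 * ∫ ω in A, X ω * Y ω ∂μ + ∫ ω in A, Y ω ^ 2 ∂μ := by
      rw [integral_add hX2XY hY₂.integrable_sq.integrableOn,
        integral_add hX₂.integrable_sq.integrableOn hXY, integral_const_mul]
    _ = ∫ ω in A, X ω ^ 2 ∂μ + ∫ ω in A, Y ω ^ 2 ∂μ := by rw [hcross]; ring

end Independent

lemma sum_Icc_sub_mul_sum_Icc (a b : ℕ → ℝ) (n : ℕ) :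
    ∑ j ∈ Icc 1 n, (a j - a (j + 1)) * ∑ i ∈ Icc 1 j, b i
      = ∑ i ∈ Icc 1 n, a i * b i - a (n + 1) * ∑ i ∈ Icc 1 n, b i := by
  induction n with
  | zero => simp
  | succ n ih =>
    rw [sum_Icc_succ_top (by omega), ih, sum_Icc_succ_top (by omega), sum_Icc_succ_top (by omega)]
    ring

lemma sum_Icc_sub_succ (a : ℕ → ℝ) {k n : ℕ} (hkn : k ≤ n + 1) :
    ∑ j ∈ Icc k n, (a j - a (j + 1)) = a k - a (n + 1) := by
  rcases hkn.eq_or_lt with rfl | hkn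
  · simp
  · rw [← neg_sub, ← sum_Icc_sub (Nat.lt_succ_iff.1 hkn) a, ← sum_neg_distrib]
    simp only [neg_sub]

section PartialSums

variable {Ω : Type*} {mΩ : MeasurableSpace Ω} {μ : Measure Ω} [IsFiniteMeasure μ] {Z : ℕ → Ω → ℝ}

lemma measurable_sum_Icc_natural (hZ : ∀ i, StronglyMeasurable (Z i)) (k : ℕ) :
    Measurable[Filtration.natural Z hZ k] fun ω => ∑ i ∈ Icc 1 k, Z i ω :=
  Finset.measurable_sum _ fun i hi => Measurable.of_comap_le <|
    le_iSup₂ (f := fun i (_ : i ≤ k) => MeasurableSpace.comap (Z i) inferInstance) i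
      (mem_Icc.1 hi).2

lemma setIntegral_sq_sum_Icc_eq_add (hZ : ∀ i, StronglyMeasurable (Z i))
    (hindep : iIndepFun Z μ) (hL2 : ∀ i, MemLp (Z i) 2 μ)
    (hmean : ∀ i, μ[Z i] = 0) {k j : ℕ} (hkj : k ≤ j) {A : Set Ω}
    (hA : MeasurableSet[Filtration.natural Z hZ k] A) :
    ∫ ω in A, (∑ i ∈ Icc 1 j, Z i ω) ^ 2 ∂μ
      = ∫ ω in A, (∑ i ∈ Icc 1 k, Z i ω) ^ 2 ∂μ + ∫ ω in A, (∑ i ∈ Ioc k j, Z i ω) ^ 2 ∂μ := by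
  have hsplit (ω : Ω) : ∑ i ∈ Icc 1 j, Z i ω = ∑ i ∈ Icc 1 k, Z i ω + ∑ i ∈ Ioc k j, Z i ω := by
    have hIcc (m : ℕ) : Icc 1 m = Ioc 0 m := Icc_add_one_left_eq_Ioc 0 m
    rw [hIcc, hIcc, sum_Ioc_consecutive _ k.zero_le hkj]
  have hle (i : ℕ) : MeasurableSpace.comap (Z i) inferInstance ≤ mΩ := (hZ i).measurable.comap_le
  have hindep' : Indep (Filtration.natural Z hZ k)
      (⨆ i ∈ Set.Ioi k, MeasurableSpace.comap (Z i) inferInstance) μ :=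
    indep_iSup_of_disjoint hle hindep.iIndep (Set.Iic_disjoint_Ioi le_rfl)
  simp_rw [hsplit]
  refine hindep'.setIntegral_add_sq ((Filtration.natural Z hZ).le k) (iSup₂_le fun i _ => hle i)
    hA ?_ ?_ (memLp_finsetSum _ fun i _ => hL2 i) (memLp_finsetSum _ fun i _ => hL2 i) ?_
  · exact measurable_sum_Icc_natural hZ k
  · refine Finset.measurable_sum _ fun i hi => Measurable.of_comap_le ?_
    exact le_iSup₂ (f := fun i (_ : i ∈ Set.Ioi k) => MeasurableSpace.comap (Z i) inferInstance) i
      (Finset.mem_Ioc.1 hi).1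
  · rw [integral_finsetSum _ fun i _ => (hL2 i).integrable one_le_two]
    simp [hmean]

lemma setIntegral_sq_sum_Icc_mono (hZ : ∀ i, StronglyMeasurable (Z i)) (hindep : iIndepFun Z μ)
    (hL2 : ∀ i, MemLp (Z i) 2 μ) (hmean : ∀ i, μ[Z i] = 0) {k j : ℕ} (hkj : k ≤ j) {A : Set Ω}
    (hA : MeasurableSet[Filtration.natural Z hZ k] A) :
    ∫ ω in A, (∑ i ∈ Icc 1 k, Z i ω) ^ 2 ∂μ ≤ ∫ ω in A, (∑ i ∈ Icc 1 j, Z i ω) ^ 2 ∂μ := by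
  rw [setIntegral_sq_sum_Icc_eq_add hZ hindep hL2 hmean hkj hA]
  exact le_add_of_nonneg_right (integral_nonneg fun ω => sq_nonneg _)

lemma integral_sq_sum_Icc (hZ : ∀ i, StronglyMeasurable (Z i)) (hindep : iIndepFun Z μ)
    (hL2 : ∀ i, MemLp (Z i) 2 μ) (hmean : ∀ i, μ[Z i] = 0) (j : ℕ) :
    ∫ ω, (∑ i ∈ Icc 1 j, Z i ω) ^ 2 ∂μ = ∑ i ∈ Icc 1 j, ∫ ω, Z i ω ^ 2 ∂μ := by
  induction j with
  | zero => simp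
  | succ j ih =>
    have h := setIntegral_sq_sum_Icc_eq_add hZ hindep hL2 hmean (j.le_add_right 1)
      MeasurableSet.univ (μ := μ)
    rw [setIntegral_univ, setIntegral_univ, setIntegral_univ, ih] at h
    rw [h, sum_Icc_succ_top (by omega)]
    simp only [Nat.Ioc_succ_singleton, sum_singleton]

end PartialSums

section Maximal

variable {Ω : Type*} {mΩ : MeasurableSpace Ω} {μ : Measure Ω} [IsFiniteMeasure μ]

lemma mul_measureReal_biUnion_le_integral {ι : Type*} (s : Finset ι) {A : ι → Set Ω}
    (hA : ∀ i ∈ s, MeasurableSet (A i)) (hdisj : (s : Set ι).PairwiseDisjoint A) {f : Ω → ℝ}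
    (hf : Integrable f μ) (hf₀ : 0 ≤ f) {ε : ℝ}
    (h : ∀ i ∈ s, ε * μ.real (A i) ≤ ∫ ω in A i, f ω ∂μ) :
    ε * μ.real (⋃ i ∈ s, A i) ≤ ∫ ω, f ω ∂μ :=
  calc ε * μ.real (⋃ i ∈ s, A i) = ∑ i ∈ s, ε * μ.real (A i) := by
        rw [measureReal_biUnion_finset hdisj hA, mul_sum]
    _ ≤ ∑ i ∈ s, ∫ ω in A i, f ω ∂μ := sum_le_sum h
    _ = ∫ ω in ⋃ i ∈ s, A i, f ω ∂μ :=
      (integral_biUnion_finset s hA hdisj fun _ _ => hf.integrableOn).symm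
    _ ≤ ∫ ω, f ω ∂μ := setIntegral_le_integral hf (ae_of_all _ hf₀)

lemma subset_biUnion_Icc_disjointed {E : ℕ → Set Ω} (hE₀ : E 0 = ∅) {k n : ℕ} (hkn : k ≤ n) :
    E k ⊆ ⋃ i ∈ Icc 1 n, disjointed E i := by
  intro ω hω
  have hω' : ω ∈ ⋃ i ∈ Iic k, disjointed E i := by
    rw [biUnion_Iic_disjointed]
    exact le_partialSups E k hω
  obtain ⟨i, hi, hωi⟩ := Set.mem_iUnion₂.1 hω'
  refine Set.mem_iUnion₂.2 ⟨i, mem_Icc.2 ⟨Nat.pos_of_ne_zero ?_, (mem_Iic.1 hi).trans hkn⟩, hωi⟩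
  rintro rfl
  simp [disjointed_zero, hE₀] at hωi

lemma MeasureTheory.Filtration.measurableSet_disjointed (ℱ : Filtration ℕ mΩ) {E : ℕ → Set Ω}
    (hE : ∀ k, MeasurableSet[ℱ k] (E k)) (k : ℕ) : MeasurableSet[ℱ k] (disjointed E k) := by
  rw [disjointed_eq_inter_compl]
  exact (hE k).inter <| .iInter fun j => .iInter fun hj => (ℱ.mono hj.le _ (hE j)).compl

variable {Z : ℕ → Ω → ℝ}

lemma integral_sum_sub_mul_sq_sum_Icc (hZ : ∀ i, StronglyMeasurable (Z i))
    (hindep : iIndepFun Z μ) (hL2 : ∀ i, MemLp (Z i) 2 μ) (hmean : ∀ i, μ[Z i] = 0)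
    {a : ℕ → ℝ} {n : ℕ} (ha₀ : a (n + 1) = 0) :
    ∫ ω, ∑ j ∈ Icc 1 n, (a j - a (j + 1)) * (∑ i ∈ Icc 1 j, Z i ω) ^ 2 ∂μ
      = ∑ i ∈ Icc 1 n, a i * ∫ ω, Z i ω ^ 2 ∂μ := by
  rw [integral_finsetSum _ fun j _ =>
    ((memLp_finsetSum _ fun i _ => hL2 i).integrable_sq).const_mul _]
  simp_rw [integral_const_mul, integral_sq_sum_Icc hZ hindep hL2 hmean]
  rw [sum_Icc_sub_mul_sum_Icc, ha₀, zero_mul, sub_zero]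

lemma mul_measureReal_le_setIntegral_sum_sub_mul_sq_sum_Icc (hZ : ∀ i, StronglyMeasurable (Z i))
    (hindep : iIndepFun Z μ) (hL2 : ∀ i, MemLp (Z i) 2 μ) (hmean : ∀ i, μ[Z i] = 0)
    {a : ℕ → ℝ} {n k : ℕ} (ha : ∀ j ∈ Icc 1 n, a (j + 1) ≤ a j) (ha₀ : a (n + 1) = 0)
    (hk : k ∈ Icc 1 n) {ε : ℝ} {A : Set Ω} (hA : MeasurableSet[Filtration.natural Z hZ k] A)
    (hεA : ∀ ω ∈ A, ε ≤ a k * (∑ i ∈ Icc 1 k, Z i ω) ^ 2) :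
    ε * μ.real A ≤ ∫ ω in A, ∑ j ∈ Icc 1 n, (a j - a (j + 1)) * (∑ i ∈ Icc 1 j, Z i ω) ^ 2 ∂μ := by
  have hA' : MeasurableSet A := (Filtration.natural Z hZ).le k _ hA
  have hSq (j : ℕ) : Integrable (fun ω => (∑ i ∈ Icc 1 j, Z i ω) ^ 2) μ :=
    (memLp_finsetSum _ fun i _ => hL2 i).integrable_sq
  have hw : ∀ j ∈ Icc 1 n, 0 ≤ a j - a (j + 1) := fun j hj => sub_nonneg.2 (ha j hj)
  rw [mem_Icc] at hk
  calc ε * μ.real A = ∫ ω in A, ε ∂μ := by rw [setIntegral_const, smul_eq_mul, mul_comm]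
    _ ≤ ∫ ω in A, a k * (∑ i ∈ Icc 1 k, Z i ω) ^ 2 ∂μ :=
      setIntegral_mono_on integrableOn_const ((hSq k).const_mul _).integrableOn hA' hεA
    _ = ∑ j ∈ Icc k n, (a j - a (j + 1)) * ∫ ω in A, (∑ i ∈ Icc 1 k, Z i ω) ^ 2 ∂μ := by
      rw [← sum_mul, sum_Icc_sub_succ a (by omega), ha₀, sub_zero, integral_const_mul]
    _ ≤ ∑ j ∈ Icc k n, (a j - a (j + 1)) * ∫ ω in A, (∑ i ∈ Icc 1 j, Z i ω) ^ 2 ∂μ := by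
      refine sum_le_sum fun j hj => mul_le_mul_of_nonneg_left ?_ (hw j ?_)
      · exact setIntegral_sq_sum_Icc_mono hZ hindep hL2 hmean (mem_Icc.1 hj).1 hA
      · exact Icc_subset_Icc_left hk.1 hj
    _ ≤ ∑ j ∈ Icc 1 n, (a j - a (j + 1)) * ∫ ω in A, (∑ i ∈ Icc 1 j, Z i ω) ^ 2 ∂μ :=
      sum_le_sum_of_subset_of_nonneg (Icc_subset_Icc_left hk.1) fun j hj _ =>
        mul_nonneg (hw j hj) (integral_nonneg fun ω => sq_nonneg _)
    _ = _ := by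
      rw [integral_finsetSum _ fun j _ => ((hSq j).const_mul _).integrableOn]
      simp_rw [integral_const_mul]

theorem mul_measureReal_exists_le_mul_sq_sum_Icc_le (hZ : ∀ i, StronglyMeasurable (Z i))
    (hindep : iIndepFun Z μ) (hL2 : ∀ i, MemLp (Z i) 2 μ) (hmean : ∀ i, μ[Z i] = 0)
    {a : ℕ → ℝ} {n : ℕ} (ha : ∀ k, 1 ≤ k → k < n → a (k + 1) ≤ a k) (ha₀ : 0 ≤ a n)
    {ε : ℝ} (hε : 0 < ε) :
    ε * μ.real {ω | ∃ k ∈ Icc 1 n, ε ≤ a k * (∑ i ∈ Icc 1 k, Z i ω) ^ 2}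
      ≤ ∑ k ∈ Icc 1 n, a k * ∫ ω, Z k ω ^ 2 ∂μ := by
  set ℱ := Filtration.natural Z hZ
  set E : ℕ → Set Ω := fun k => {ω | ε ≤ a k * (∑ i ∈ Icc 1 k, Z i ω) ^ 2}
  -- truncating `a` after `n` makes the weights `b j - b (j + 1)` nonnegative and telescoping
  set b : ℕ → ℝ := fun k => if k ≤ n then a k else 0
  have hb : ∀ j ∈ Icc 1 n, b (j + 1) ≤ b j := by
    intro j hj
    rw [mem_Icc] at hj
    rcases hj.2.lt_or_eq with hjn | rfl
    · simp only [b, if_pos (Nat.succ_le_of_lt hjn), if_pos hj.2]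
      exact ha j hj.1 hjn
    · simpa [b] using ha₀
  have hb₀ : b (n + 1) = 0 := by simp [b]
  have hE (k : ℕ) : MeasurableSet[ℱ k] (E k) :=
    measurableSet_le measurable_const (((measurable_sum_Icc_natural hZ k).pow_const 2).const_mul _)
  have hcover : {ω | ∃ k ∈ Icc 1 n, ε ≤ a k * (∑ i ∈ Icc 1 k, Z i ω) ^ 2}
      ⊆ ⋃ k ∈ Icc 1 n, disjointed E k := by
    have hE₀ : E 0 = ∅ := by
      ext ω
      simpa [E] using hε
    rintro ω ⟨k, hk, hω⟩
    exact subset_biUnion_Icc_disjointed hE₀ (mem_Icc.1 hk).2 hω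
  calc ε * μ.real {ω | ∃ k ∈ Icc 1 n, ε ≤ a k * (∑ i ∈ Icc 1 k, Z i ω) ^ 2}
      ≤ ε * μ.real (⋃ k ∈ Icc 1 n, disjointed E k) :=
        mul_le_mul_of_nonneg_left (measureReal_mono hcover (measure_ne_top μ _)) hε.le
    _ ≤ ∫ ω, ∑ j ∈ Icc 1 n, (b j - b (j + 1)) * (∑ i ∈ Icc 1 j, Z i ω) ^ 2 ∂μ := by
      refine mul_measureReal_biUnion_le_integral _
        (fun k _ => ℱ.le k _ (ℱ.measurableSet_disjointed hE k))
        ((disjoint_disjointed E).set_pairwise _) ?_ ?_ fun k hk => ?_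
      · exact integrable_finsetSum _ fun j _ =>
          ((memLp_finsetSum _ fun i _ => hL2 i).integrable_sq).const_mul _
      · exact fun ω => sum_nonneg fun j hj => mul_nonneg (sub_nonneg.2 (hb j hj)) (sq_nonneg _)
      · refine mul_measureReal_le_setIntegral_sum_sub_mul_sq_sum_Icc hZ hindep hL2 hmean hb hb₀ hk
          (ℱ.measurableSet_disjointed hE k) fun ω hω => ?_
        simpa [b, E, (mem_Icc.1 hk).2] using disjointed_subset E k hω
    _ = ∑ k ∈ Icc 1 n, a k * ∫ ω, Z k ω ^ 2 ∂μ := by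
      rw [integral_sum_sub_mul_sq_sum_Icc hZ hindep hL2 hmean hb₀]
      exact sum_congr rfl fun k hk => by simp [b, (mem_Icc.1 hk).2]

end Maximal

theorem hajek_renyi_bound_general
    {Ω : Type*} [MeasurableSpace Ω] (μ : Measure Ω) [IsProbabilityMeasure μ]
    (n : ℕ) (Z : ℕ → Ω → ℝ) (c : ℕ → ℝ)
    (hmeas : ∀ i, Measurable (Z i))
    (hindep : iIndepFun Z μ)
    (hL2 : ∀ i, MemLp (Z i) 2 μ)
    (hmean : ∀ i, ∫ ω, Z i ω ∂μ = 0)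
    (hcpos : ∀ k, 1 ≤ k → k ≤ n → 0 < c k)
    (hcmono : ∀ k, 1 ≤ k → k < n → c k ≤ c (k + 1))
    (α : ℝ) (hα : 0 < α) :
    μ {ω | ∃ k, 1 ≤ k ∧ k ≤ n ∧ α < |∑ i ∈ Icc 1 k, Z i ω| / c k}
      ≤ ENNReal.ofReal (α⁻¹ ^ 2 * ∑ k ∈ Icc 1 n, (∫ ω, (Z k ω) ^ 2 ∂μ) / c k ^ 2) := by
  set B := {ω | ∃ k ∈ Icc 1 n, α ^ 2 ≤ (c k ^ 2)⁻¹ * (∑ i ∈ Icc 1 k, Z i ω) ^ 2}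
  have hsub : {ω | ∃ k, 1 ≤ k ∧ k ≤ n ∧ α < |∑ i ∈ Icc 1 k, Z i ω| / c k} ⊆ B := by
    rintro ω ⟨k, hk₁, hkn, hω⟩
    refine ⟨k, mem_Icc.2 ⟨hk₁, hkn⟩, ?_⟩
    calc α ^ 2 ≤ (|∑ i ∈ Icc 1 k, Z i ω| / c k) ^ 2 := pow_le_pow_left₀ hα.le hω.le 2
      _ = (c k ^ 2)⁻¹ * (∑ i ∈ Icc 1 k, Z i ω) ^ 2 := by rw [div_pow, sq_abs, inv_mul_eq_div]
  have hbound : α ^ 2 * μ.real B ≤ ∑ k ∈ Icc 1 n, (c k ^ 2)⁻¹ * ∫ ω, Z k ω ^ 2 ∂μ :=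
    mul_measureReal_exists_le_mul_sq_sum_Icc_le (fun i => (hmeas i).stronglyMeasurable) hindep
      hL2 hmean (fun k hk₁ hkn => inv_anti₀ (pow_pos (hcpos k hk₁ hkn.le) 2)
        (pow_le_pow_left₀ (hcpos k hk₁ hkn.le).le (hcmono k hk₁ hkn) 2))
      (inv_nonneg.2 (sq_nonneg _)) (pow_pos hα 2)
  refine (measure_mono hsub).trans ?_
  rw [← ofReal_measureReal (measure_ne_top μ B)]
  refine ENNReal.ofReal_le_ofReal ?_
  rw [inv_pow, inv_mul_eq_div, le_div_iff₀ (pow_pos hα 2), mul_comm]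
  exact hbound.trans_eq (sum_congr rfl fun k _ => inv_mul_eq_div _ _)

/-- Hájek–Rényi type maximal inequality. -/
theorem hajek_renyi_bound
    {Ω : Type*} [MeasurableSpace Ω] (μ : Measure Ω) [IsProbabilityMeasure μ]
    (n : ℕ) (hn : 1 ≤ n) (Z : ℕ → Ω → ℝ) (c : ℕ → ℝ)
    (hmeas : ∀ i, Measurable (Z i))
    (hindep : iIndepFun Z μ)
    (hL2 : ∀ i, MemLp (Z i) 2 μ)
    (hmean : ∀ i, ∫ ω, Z i ω ∂μ = 0)
    (hcpos : ∀ k, 1 ≤ k → k ≤ n → 0 < c k)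
    (hcmono : ∀ k, 1 ≤ k → k < n → c k ≤ c (k + 1))
    (α : ℝ) (hα : 0 < α) :
    μ {ω | ∃ k, 1 ≤ k ∧ k ≤ n ∧ α < |∑ i ∈ Icc 1 k, Z i ω| / c k}
      ≤ ENNReal.ofReal (α⁻¹ ^ 2 * ∑ k ∈ Icc 1 n, (∫ ω, (Z k ω) ^ 2 ∂μ) / c k ^ 2) :=
  hajek_renyi_bound_general μ n Z c hmeas hindep hL2 hmean hcpos hcmono α hα
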